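/- arXiv:1006.3488 — 5 statements merged into one kernel-verified Lean document; each statement's English description precedes it below -/
import Mathlib

section
/- For any symmetric positive definite 2×2 real matrix b and any 2×2 real matrix m, there exists a unique antisymmetric 2×2 matrix a such that b·m + a·b is symmetric. -/
/-!
For symmetric `b` and skew `a`, the matrix `b * m + a * b` is symmetric iff
`a * b + b * a = mᵀ * b - b * m`, whose right-hand side is again skew. A skew `2 × 2` matrix is
a multiple `t • J` of `J = !![0, 1; -1, 0]`, and `J * b + b * J = (trace b) • J` for symmetric `b`,
so the equation reads `t * trace b = (mᵀ * b - b * m) 0 1`. Since `trace b > 0` for positive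
definite `b`, it has exactly one solution `t`.
-/

open Matrix

namespace Matrix

variable {R : Type*}

section Square

variable {n : Type*} [Fintype n] [CommRing R]

lemma isSymm_mul_add_mul_iff {a b : Matrix n n R} (ha : aᵀ = -a) (hb : b.IsSymm)
    (m : Matrix n n R) : (b * m + a * b).IsSymm ↔ a * b + b * a = mᵀ * b - b * m := by
  rw [IsSymm, transpose_add, transpose_mul, transpose_mul, ha, hb.eq, mul_neg,
    ← sub_eq_add_neg, sub_eq_iff_eq_add, eq_sub_iff_add_eq]
  constructor
  · intro h; rw [h]; abel
  · intro h; rw [← h]; abel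

lemma transpose_transpose_mul_sub_mul {b : Matrix n n R} (hb : b.IsSymm) (m : Matrix n n R) :
    (mᵀ * b - b * m)ᵀ = -(mᵀ * b - b * m) := by
  rw [transpose_sub, transpose_mul, transpose_mul, hb.eq, transpose_transpose, neg_sub]

end Square

def skewBasis [Zero R] [One R] [Neg R] : Matrix (Fin 2) (Fin 2) R := !![0, 1; -1, 0]

section SkewBasis

variable [CommRing R]

lemma smul_skewBasis_apply_zero_one (t : R) :
    (t • skewBasis : Matrix (Fin 2) (Fin 2) R) 0 1 = t := by
  simp [skewBasis]

lemma transpose_smul_skewBasis (t : R) :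
    (t • skewBasis : Matrix (Fin 2) (Fin 2) R)ᵀ = -(t • skewBasis) := by
  ext i j; fin_cases i <;> fin_cases j <;> simp [skewBasis]

lemma eq_smul_skewBasis_of_transpose_eq_neg [IsAddTorsionFree R] {a : Matrix (Fin 2) (Fin 2) R}
    (ha : aᵀ = -a) : a = a 0 1 • skewBasis := by
  have hij (i j : Fin 2) : a j i = -a i j := by simpa using congrFun (congrFun ha i) j
  have h00 : a 0 0 = 0 := self_eq_neg.mp (hij 0 0)
  have h11 : a 1 1 = 0 := self_eq_neg.mp (hij 1 1)
  ext i j; fin_cases i <;> fin_cases j <;> simp [skewBasis, h00, h11, hij 0 1]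

lemma skewBasis_mul_add_transpose_mul_skewBasis (b : Matrix (Fin 2) (Fin 2) R) :
    skewBasis * b + bᵀ * skewBasis = b.trace • skewBasis := by
  ext i j; fin_cases i <;> fin_cases j <;>
    simp [skewBasis, trace_fin_two, mul_apply, vecMul, dotProduct] <;> ring

lemma smul_skewBasis_mul_add_mul_smul_skewBasis {b : Matrix (Fin 2) (Fin 2) R} (hb : b.IsSymm)
    (t : R) : t • skewBasis * b + b * (t • skewBasis) = (t * b.trace) • skewBasis := by
  have h := skewBasis_mul_add_transpose_mul_skewBasis b
  rw [hb.eq] at h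
  rw [smul_mul, Matrix.mul_smul, ← smul_add, h, smul_smul]

end SkewBasis

end Matrix

theorem stmt_5 (b m : Matrix (Fin 2) (Fin 2) ℝ) (hb : b.PosDef) :
    ∃! a : Matrix (Fin 2) (Fin 2) ℝ, aᵀ = -a ∧ (b * m + a * b).IsSymm := by
  have hb_symm : b.IsSymm := isHermitian_iff_isSymm.mp hb.isHermitian
  have htr : b.trace ≠ 0 := hb.trace_pos.ne'
  set c := mᵀ * b - b * m
  have hc : c = c 0 1 • skewBasis :=
    eq_smul_skewBasis_of_transpose_eq_neg (transpose_transpose_mul_sub_mul hb_symm m)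
  refine ⟨(c 0 1 / b.trace) • skewBasis, ⟨transpose_smul_skewBasis _, ?_⟩, ?_⟩
  · rw [isSymm_mul_add_mul_iff (transpose_smul_skewBasis _) hb_symm,
      smul_skewBasis_mul_add_mul_smul_skewBasis hb_symm, div_mul_cancel₀ _ htr, ← hc]
  · rintro a ⟨ha, hs⟩
    rw [isSymm_mul_add_mul_iff ha hb_symm, eq_smul_skewBasis_of_transpose_eq_neg ha,
      smul_skewBasis_mul_add_mul_smul_skewBasis hb_symm] at hs
    have h01 : a 0 1 * b.trace = c 0 1 := by
      rw [← smul_skewBasis_apply_zero_one (a 0 1 * b.trace), hs]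
    rw [eq_smul_skewBasis_of_transpose_eq_neg ha, ← h01, mul_div_cancel_right₀ _ htr]
end

section
/- For any symmetric positive definite 3×3 real matrix b and any 3×3 real matrix m, there exists a unique antisymmetric 3×3 matrix a such that b·m + a·b is symmetric. -/
/-!
For antisymmetric `a` and symmetric `b`, the condition that `b * m + a * b` be symmetric is the
Lyapunov equation `a * b + b * a = mᵀ * b - b * m`, whose right-hand side is antisymmetric.
When `b` is positive definite, `X ↦ X * b + b * X` is injective: from `X * b = -(b * X)` one gets
`tr (X * b * Xᴴ) = -tr (Xᴴ * b * X)`, and both traces are nonnegative, so both vanish, forcing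
`X = 0`. Being a linear endomorphism of a finite-dimensional space it is then bijective, and
since transposing a solution for an antisymmetric right-hand side and negating it gives another
solution, the unique solution is antisymmetric.
-/

open Matrix
open scoped ComplexOrder

namespace Matrix.PosDef

variable {m n 𝕜 : Type*} [Fintype m] [Fintype n] [RCLike 𝕜] {b : Matrix n n 𝕜}

lemma eq_zero_of_trace_mul_mul_conjTranspose_eq_zero (hb : b.PosDef) {X : Matrix m n 𝕜}
    (h : (X * b * Xᴴ).trace = 0) : X = 0 := by
  have hzero : X * b * Xᴴ = 0 :=
    (hb.posSemidef.mul_mul_conjTranspose_same X).trace_eq_zero_iff.mp h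
  ext i j
  have hrow : star (X i) = 0 := by
    by_contra hne
    have hpos := hb.dotProduct_mulVec_pos hne
    have hdiag : star (star (X i)) ⬝ᵥ (b *ᵥ star (X i)) = (X * b * Xᴴ) i i := by
      simp only [dotProduct, Pi.star_apply, RCLike.star_def, RingHomCompTriple.comp_apply,
        RingHom.id_apply, mulVec, Finset.mul_sum, mul_apply, conjTranspose_apply, Finset.sum_mul,
        mul_assoc]
      exact Finset.sum_comm
    rw [hdiag, hzero] at hpos
    exact lt_irrefl _ hpos
  simpa using congrFun hrow j

lemma mul_add_mul_eq_zero (hb : b.PosDef) {X : Matrix n n 𝕜} (h : X * b + b * X = 0) :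
    X = 0 := by
  have hX : X * b = -(b * X) := eq_neg_of_add_eq_zero_left h
  have hXH : b * Xᴴ = -(Xᴴ * b) := by
    simpa [hb.isHermitian.eq] using congrArg (·ᴴ) hX
  have htrace : (X * b * Xᴴ).trace + (Xᴴ * b * X).trace = 0 := by
    rw [mul_assoc, trace_mul_comm, hXH, neg_mul, trace_neg, neg_add_cancel]
  have h₁ := (hb.posSemidef.mul_mul_conjTranspose_same X).trace_nonneg
  have h₂ := (hb.posSemidef.conjTranspose_mul_mul_same X).trace_nonneg
  exact hb.eq_zero_of_trace_mul_mul_conjTranspose_eq_zero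
    ((add_eq_zero_iff_of_nonneg h₁ h₂).mp htrace).1

lemma injective_mul_add_mul (hb : b.PosDef) : Function.Injective fun X => X * b + b * X := by
  intro X Y (hXY : X * b + b * X = Y * b + b * Y)
  refine sub_eq_zero.mp (hb.mul_add_mul_eq_zero ?_)
  rw [sub_mul, mul_sub, sub_add_sub_comm, hXY, sub_self]

lemma bijective_mul_add_mul (hb : b.PosDef) : Function.Bijective fun X => X * b + b * X :=
  ⟨hb.injective_mul_add_mul,
    (LinearMap.mulRight 𝕜 b + LinearMap.mulLeft 𝕜 b).injective_iff_surjective.mp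
      hb.injective_mul_add_mul⟩

lemma exists_transpose_eq_neg_and_mul_add_mul_eq {b C : Matrix n n ℝ} (hb : b.PosDef)
    (hC : Cᵀ = -C) : ∃ a : Matrix n n ℝ, aᵀ = -a ∧ a * b + b * a = C := by
  obtain ⟨a, ha : a * b + b * a = C⟩ := hb.bijective_mul_add_mul.surjective C
  refine ⟨a, hb.injective_mul_add_mul ?_, ha⟩
  have hbs : bᵀ = b := hb.isHermitian.eq
  calc aᵀ * b + b * aᵀ = (a * b + b * a)ᵀ := by
        rw [transpose_add, transpose_mul, transpose_mul, hbs, add_comm]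
    _ = -a * b + b * -a := by rw [ha, hC, ← ha, neg_mul, mul_neg, neg_add]

end Matrix.PosDef

lemma Matrix.isSymm_mul_add_mul_iff_s6 {n R : Type*} [Fintype n] [CommRing R]
    {a b m : Matrix n n R} (hb : b.IsSymm) (ha : aᵀ = -a) :
    (b * m + a * b).IsSymm ↔ a * b + b * a = mᵀ * b - b * m := by
  rw [IsSymm, transpose_add, transpose_mul, transpose_mul, hb.eq, ha]
  constructor <;> intro h <;> linear_combination (norm := noncomm_ring) -h

theorem stmt_6 (b m : Matrix (Fin 3) (Fin 3) ℝ) (hb : b.PosDef) :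
    ∃! a : Matrix (Fin 3) (Fin 3) ℝ, aᵀ = -a ∧ (b * m + a * b).IsSymm := by
  have hbs : b.IsSymm := hb.isHermitian.eq
  have hC : (mᵀ * b - b * m)ᵀ = -(mᵀ * b - b * m) := by
    rw [transpose_sub, transpose_mul, transpose_mul, transpose_transpose, hbs.eq, neg_sub]
  obtain ⟨a, ha, hab⟩ := hb.exists_transpose_eq_neg_and_mul_add_mul_eq hC
  refine ⟨a, ⟨ha, (isSymm_mul_add_mul_iff_s6 hbs ha).mpr hab⟩, ?_⟩
  rintro a' ⟨ha', hsymm⟩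
  exact hb.injective_mul_add_mul (((isSymm_mul_add_mul_iff_s6 hbs ha').mp hsymm).trans hab.symm)
end

section
/- Let b(t) be a differentiable matrix-valued function satisfying b' = b·m + a·b + (1/(2W))((bᵀ)⁻¹ − b) for some matrix function m(t), antisymmetric matrix function a(t), and constant W > 0, with b(t) invertible for all t. Then c(t) = b(t)ᵀ b(t) satisfies c' = c·m + mᵀ·c + (1/W)(I − c). -/
/-! Differentiating `c = bᵀ b` entrywise gives `c' = b'ᵀ b + bᵀ b'`. Substituting the evolution
of `b`, the rotation `a b` contributes `bᵀ (aᵀ + a) b = 0`, and the relaxation term contributes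
`(2W)⁻¹ ((b⁻¹ - bᵀ) b + bᵀ ((bᵀ)⁻¹ - b)) = W⁻¹ (1 - bᵀ b)`. -/

open Matrix

namespace Matrix

theorem hasDerivAt_mul_apply {𝕜 : Type*} [NontriviallyNormedField 𝕜]
    {l m n : Type*} [Fintype m] {A : 𝕜 → Matrix l m 𝕜} {B : 𝕜 → Matrix m n 𝕜}
    {A' : Matrix l m 𝕜} {B' : Matrix m n 𝕜} {t : 𝕜}
    (hA : ∀ i j, HasDerivAt (fun s => A s i j) (A' i j) t)
    (hB : ∀ i j, HasDerivAt (fun s => B s i j) (B' i j) t) (i : l) (j : n) :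
    HasDerivAt (fun s => (A s * B s) i j) ((A' * B t + A t * B') i j) t := by
  simp only [mul_apply, add_apply, ← Finset.sum_add_distrib]
  exact HasDerivAt.fun_sum fun k _ => (hA i k).mul (hB k j)

variable {n R : Type*} [Fintype n] [CommRing R]

theorem transpose_mul_mul_add_transpose_mul_mul_of_transpose_eq_neg {a : Matrix n n R}
    (ha : aᵀ = -a) (b : Matrix n n R) : (a * b)ᵀ * b + bᵀ * (a * b) = 0 := by
  rw [transpose_mul, ha, Matrix.mul_assoc, Matrix.neg_mul, Matrix.mul_neg, neg_add_cancel]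

theorem transpose_mul_add_transpose_mul_sub_of_isUnit_det [DecidableEq n] {b : Matrix n n R}
    (hb : IsUnit b.det) :
    ((bᵀ)⁻¹ - b)ᵀ * b + bᵀ * ((bᵀ)⁻¹ - b) = (2 : R) • (1 - bᵀ * b) := by
  have hbT : IsUnit bᵀ.det := by rwa [det_transpose]
  rw [transpose_sub, transpose_nonsing_inv, transpose_transpose, Matrix.sub_mul, Matrix.mul_sub,
    nonsing_inv_mul _ hb, mul_nonsing_inv _ hbT, two_smul]

end Matrix

theorem stmt_7_general (n : ℕ) (b m a : ℝ → Matrix (Fin n) (Fin n) ℝ) (W : ℝ)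
    (hanti : ∀ t, (a t)ᵀ = -(a t))
    (hinv : ∀ t, IsUnit (b t).det)
    (hder : ∀ t (i j : Fin n), HasDerivAt (fun s => b s i j)
      ((b t * m t + a t * b t + (2 * W)⁻¹ • (((b t)ᵀ)⁻¹ - b t)) i j) t) :
    ∀ t (i j : Fin n), HasDerivAt (fun s => ((b s)ᵀ * b s) i j)
      (((b t)ᵀ * b t * m t + (m t)ᵀ * ((b t)ᵀ * b t) +
        W⁻¹ • ((1 : Matrix (Fin n) (Fin n) ℝ) - (b t)ᵀ * b t)) i j) t := by
  intro t i j
  set D := b t * m t + a t * b t + (2 * W)⁻¹ • (((b t)ᵀ)⁻¹ - b t)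
  have hrot := transpose_mul_mul_add_transpose_mul_mul_of_transpose_eq_neg (hanti t) (b t)
  have hrelax := transpose_mul_add_transpose_mul_sub_of_isUnit_det (hinv t)
  have hcoef : (2 * W)⁻¹ * 2 = W⁻¹ := by rw [mul_inv]; ring
  have hcD : Dᵀ * b t + (b t)ᵀ * D =
      (b t)ᵀ * b t * m t + (m t)ᵀ * ((b t)ᵀ * b t) + W⁻¹ • (1 - (b t)ᵀ * b t) :=
    calc Dᵀ * b t + (b t)ᵀ * D
        = (b t * m t)ᵀ * b t + (b t)ᵀ * (b t * m t)
            + ((a t * b t)ᵀ * b t + (b t)ᵀ * (a t * b t))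
            + (2 * W)⁻¹ • (((b t)ᵀ⁻¹ - b t)ᵀ * b t + (b t)ᵀ * ((b t)ᵀ⁻¹ - b t)) := by
          simp only [D, transpose_add, transpose_smul, Matrix.add_mul, Matrix.mul_add,
            Matrix.smul_mul, Matrix.mul_smul, smul_add]
          abel
      _ = (b t)ᵀ * b t * m t + (m t)ᵀ * ((b t)ᵀ * b t) + W⁻¹ • (1 - (b t)ᵀ * b t) := by
          rw [hrot, hrelax, smul_smul, hcoef, add_zero, transpose_mul, Matrix.mul_assoc,
            ← Matrix.mul_assoc (b t)ᵀ, add_comm ((m t)ᵀ * _)]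
  rw [← hcD]
  exact hasDerivAt_mul_apply (A' := Dᵀ) (fun i j => hder t j i) (hder t) i j

theorem stmt_7 (n : ℕ) (b m a : ℝ → Matrix (Fin n) (Fin n) ℝ) (W : ℝ) (hW : 0 < W)
    (hanti : ∀ t, (a t)ᵀ = -(a t))
    (hinv : ∀ t, IsUnit (b t).det)
    (hder : ∀ t (i j : Fin n), HasDerivAt (fun s => b s i j)
      ((b t * m t + a t * b t + (2 * W)⁻¹ • (((b t)ᵀ)⁻¹ - b t)) i j) t) :
    ∀ t (i j : Fin n), HasDerivAt (fun s => ((b s)ᵀ * b s) i j)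
      (((b t)ᵀ * b t * m t + (m t)ᵀ * ((b t)ᵀ * b t) +
        W⁻¹ • ((1 : Matrix (Fin n) (Fin n) ℝ) - (b t)ᵀ * b t)) i j) t :=
  stmt_7_general n b m a W hanti hinv hder
end

section
/- Solutions of the spatially homogeneous Oldroyd-B conformation equation c' = c·m + mᵀ·c + (1/W)(I − c) with c(0) symmetric positive definite remain symmetric positive definite for all t ≥ 0 (assuming m is continuous). -/
/-!
The skew part `c - cᵀ` solves the linear equation `X' = X m + mᵀ X - W⁻¹ X` and vanishes at
`t = 0`, so by uniqueness `c` stays symmetric. Positive definiteness is an open condition on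
symmetric matrices, so if it is ever lost there is a first time `T > 0` at which `c T` is only
semidefinite, with a null vector `x`. As `c T x = 0` kills the transport terms,
`d/dt ⟪x, c x⟫ = W⁻¹ ‖x‖² > 0` at `T`, while `⟪x, c x⟫` is positive before `T` and zero at `T`.
-/

open Matrix Set Filter Topology

attribute [local instance] Matrix.normedAddCommGroup Matrix.normedSpace

theorem eq_zero_of_hasDerivAt_clm_apply {E : Type*} [NormedAddCommGroup E] [NormedSpace ℝ E]
    {L : ℝ → E →L[ℝ] E} (hL : Continuous L) {f : ℝ → E}
    (hf : ∀ t, HasDerivAt f (L t (f t)) t) {t₀ : ℝ} (h₀ : f t₀ = 0) : f = 0 := by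
  funext t
  obtain ⟨b, ht, ht₀⟩ : ∃ b, t ∈ Ioo (-b) b ∧ t₀ ∈ Ioo (-b) b :=
    ⟨|t| + |t₀| + 1, by constructor <;> constructor <;>
      linarith [neg_abs_le t, le_abs_self t, neg_abs_le t₀, le_abs_self t₀]⟩
  obtain ⟨C, hC⟩ := (isCompact_Icc (a := -b) (b := b)).exists_bound_of_continuousOn
    hL.continuousOn
  have hlip : ∀ s ∈ Ioo (-b) b, LipschitzOnWith C.toNNReal (L s) univ := fun s hs =>
    ((L s).lipschitz.weaken (by
      rw [← NNReal.coe_le_coe, Real.coe_toNNReal', coe_nnnorm]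
      exact (hC s (Ioo_subset_Icc_self hs)).trans (le_max_left _ _))).lipschitzOnWith
  exact ODE_solution_unique_of_mem_Icc hlip ht₀
    (HasDerivAt.continuousOn fun s _ => hf s) (fun s _ => hf s) (fun _ _ => trivial)
    continuousOn_const (fun s _ => by simpa using hasDerivAt_const s (0 : E))
    (fun _ _ => trivial) h₀ (Ioo_subset_Icc_self ht)

theorem HasDerivWithinAt.nonpos_of_eventually_le_nhdsLT {g : ℝ → ℝ} {g' T : ℝ}
    (hg : HasDerivWithinAt g g' (Iio T) T) (hle : ∀ᶠ s in 𝓝[<] T, g T ≤ g s) : g' ≤ 0 := by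
  have hslope := hasDerivWithinAt_iff_tendsto_slope.mp hg
  rw [sdiff_singleton_eq_self self_notMem_Iio] at hslope
  refine le_of_tendsto hslope ?_
  filter_upwards [hle, self_mem_nhdsWithin] with s hs hsT
  rw [slope_def_field]
  exact div_nonpos_of_nonneg_of_nonpos (sub_nonneg.2 hs) (sub_nonpos.2 (le_of_lt hsT))

theorem forall_ge_of_continuous_induction {P : ℝ → Prop} {a : ℝ} (ha : P a)
    (hopen : ∀ t, a ≤ t → P t → ∀ᶠ s in 𝓝[>] t, P s)
    (hclosed : ∀ T, a < T → (∀ s ∈ Ico a T, P s) → P T) : ∀ t, a ≤ t → P t := by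
  by_contra! hbad
  set A := {t | a ≤ t ∧ ¬ P t}
  have hA : A.Nonempty := hbad
  have hAbdd : BddBelow A := ⟨a, fun _ h => h.1⟩
  have haT : a ≤ sInf A := le_csInf hA fun _ h => h.1
  have hbefore : ∀ s ∈ Ico a (sInf A), P s := fun s hs =>
    by_contra fun h => (csInf_le hAbdd ⟨hs.1, h⟩).not_gt hs.2
  have hT : P (sInf A) :=
    haT.eq_or_lt.elim (fun h => h ▸ ha) (fun h => hclosed _ h hbefore)
  obtain ⟨u, hTu, hu⟩ := mem_nhdsGT_iff_exists_Ioo_subset.mp (hopen _ haT hT)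
  obtain ⟨s, hsA, hsu⟩ := exists_lt_of_csInf_lt hA hTu
  rcases (csInf_le hAbdd hsA).eq_or_lt with h | h
  · exact hsA.2 (h ▸ hT)
  · exact hsA.2 (hu ⟨h, hsu⟩)

namespace Matrix

variable {ι : Type*} [Fintype ι]

theorem isClosed_setOf_posSemidef : IsClosed {A : Matrix ι ι ℝ | A.PosSemidef} := by
  simp only [posSemidef_iff_dotProduct_mulVec, ofPred_and, ofPred_forall]
  exact (isClosed_eq continuous_id.matrix_conjTranspose continuous_id).inter
    (isClosed_iInter fun x => isClosed_le continuous_const (by fun_prop))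

theorem PosDef.eventually_posDef {A : Matrix ι ι ℝ} (hA : A.PosDef) :
    ∀ᶠ B in 𝓝 A, B.IsHermitian → B.PosDef := by
  have hsphere : ∀ᶠ B in 𝓝 A, ∀ y ∈ Metric.sphere (0 : ι → ℝ) 1, 0 < y ⬝ᵥ B *ᵥ y := by
    refine (isCompact_sphere 0 1).eventually_forall_of_forall_eventually fun y hy => ?_
    have hAy : 0 < y ⬝ᵥ A *ᵥ y := by
      simpa using hA.dotProduct_mulVec_pos (ne_zero_of_mem_unit_sphere ⟨y, hy⟩)
    exact (show Continuous fun p : Matrix ι ι ℝ × (ι → ℝ) => p.2 ⬝ᵥ p.1 *ᵥ p.2 by fun_prop)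
      |>.continuousAt.eventually (lt_mem_nhds hAy)
  filter_upwards [hsphere] with B hB hBh
  refine posDef_iff_dotProduct_mulVec.2 ⟨hBh, fun x hx => ?_⟩
  have hx' : 0 < ‖x‖ := norm_pos_iff.2 hx
  have := hB (‖x‖⁻¹ • x) (by simp [norm_smul, hx'.ne'])
  rw [mulVec_smul, dotProduct_smul, smul_dotProduct, smul_eq_mul, smul_eq_mul] at this
  simpa using pos_of_mul_pos_right (pos_of_mul_pos_right this (by positivity)) (by positivity)

theorem hasDerivAt_iff {m n : Type*} [Fintype m] [Fintype n] {c : ℝ → Matrix m n ℝ}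
    {c' : Matrix m n ℝ} {t : ℝ} :
    HasDerivAt c c' t ↔ ∀ i j, HasDerivAt (fun s => c s i j) (c' i j) t :=
  hasDerivAt_pi.trans (forall_congr' fun _ => hasDerivAt_pi)

theorem _root_.HasDerivAt.dotProduct_mulVec {c : ℝ → Matrix ι ι ℝ} {c' : Matrix ι ι ℝ} {t : ℝ}
    (hc : HasDerivAt c c' t) (x : ι → ℝ) :
    HasDerivAt (fun s => x ⬝ᵥ c s *ᵥ x) (x ⬝ᵥ c' *ᵥ x) t := by
  simp only [dotProduct, mulVec]
  exact HasDerivAt.fun_sum fun i _ => (HasDerivAt.fun_sum fun j _ =>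
    (hasDerivAt_iff.1 hc i j).mul_const (x j)).const_mul (x i)

end Matrix

section OldroydB

variable {ι : Type*} [Fintype ι] [DecidableEq ι]

noncomputable def oldroydB (W : ℝ) (M C : Matrix ι ι ℝ) : Matrix ι ι ℝ :=
  C * M + Mᵀ * C + W⁻¹ • (1 - C)

theorem oldroydB_sub_transpose (W : ℝ) (M C : Matrix ι ι ℝ) :
    oldroydB W M C - (oldroydB W M C)ᵀ = (C - Cᵀ) * M + Mᵀ * (C - Cᵀ) - W⁻¹ • (C - Cᵀ) := by
  simp only [oldroydB, transpose_add, transpose_mul, transpose_smul, transpose_sub,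
    transpose_one, transpose_transpose, sub_mul, mul_sub, smul_sub]
  abel

theorem isSymm_of_hasDerivAt_oldroydB {c m : ℝ → Matrix ι ι ℝ} {W : ℝ} (hm : Continuous m)
    (hc : ∀ t, HasDerivAt c (oldroydB W (m t) (c t)) t) {t₀ : ℝ} (h₀ : (c t₀).IsSymm) (t : ℝ) :
    (c t).IsSymm := by
  let L : ℝ → Matrix ι ι ℝ →L[ℝ] Matrix ι ι ℝ := fun s => LinearMap.toContinuousLinearMap
    (LinearMap.mulRight ℝ (m s) + LinearMap.mulLeft ℝ (m s)ᵀ - W⁻¹ • LinearMap.id)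
  have hL : Continuous L := continuous_clm_apply.2 fun X =>
    show Continuous fun s => X * m s + (m s)ᵀ * X - W⁻¹ • X by fun_prop
  have hskew : ∀ s, HasDerivAt (fun s => c s - (c s)ᵀ) (L s (c s - (c s)ᵀ)) s := fun s => by
    have hcT : HasDerivAt (fun s => (c s)ᵀ) (oldroydB W (m s) (c s))ᵀ s :=
      hasDerivAt_iff.2 fun i j => hasDerivAt_iff.1 (hc s) j i
    exact ((hc s).sub hcT).congr_deriv (oldroydB_sub_transpose W (m s) (c s))
  have := congr_fun (eq_zero_of_hasDerivAt_clm_apply hL hskew (sub_eq_zero.2 h₀.symm)) t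
  exact (sub_eq_zero.1 this).symm

theorem dotProduct_oldroydB_mulVec (W : ℝ) (M : Matrix ι ι ℝ) {C : Matrix ι ι ℝ} (hC : C.IsSymm)
    {x : ι → ℝ} (hx : C *ᵥ x = 0) : x ⬝ᵥ oldroydB W M C *ᵥ x = W⁻¹ * (x ⬝ᵥ x) := by
  have hxC : x ᵥ* C = 0 := by rw [← hC.eq, vecMul_transpose, hx]
  simp [oldroydB, add_mulVec, sub_mulVec, smul_mulVec, ← mulVec_mulVec, dotProduct_mulVec x C,
    hx, hxC]

theorem posDef_of_hasDerivAt_oldroydB {c : ℝ → Matrix ι ι ℝ} {M : Matrix ι ι ℝ} {W T : ℝ}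
    (hW : 0 < W) (hc : HasDerivAt c (oldroydB W M (c T)) T) (hsymm : (c T).IsSymm)
    (hbefore : ∀ᶠ s in 𝓝[<] T, (c s).PosDef) : (c T).PosDef := by
  have hpsd : (c T).PosSemidef := isClosed_setOf_posSemidef.mem_of_tendsto
    (hc.continuousAt.tendsto.mono_left nhdsWithin_le_nhds) (hbefore.mono fun _ h => h.posSemidef)
  by_contra hpd
  rw [hpsd.posDef_iff_det_ne_zero, not_ne_iff] at hpd
  obtain ⟨x, hx, hCx⟩ := exists_mulVec_eq_zero_iff.2 hpd
  have hderiv : HasDerivAt (fun s => x ⬝ᵥ c s *ᵥ x) (W⁻¹ * (x ⬝ᵥ x)) T := by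
    rw [← dotProduct_oldroydB_mulVec W M hsymm hCx]
    exact hc.dotProduct_mulVec x
  have hle := hderiv.hasDerivWithinAt.nonpos_of_eventually_le_nhdsLT <|
    hbefore.mono fun s hs => by simpa [hCx] using (hs.dotProduct_mulVec_pos hx).le
  have hxx : 0 < x ⬝ᵥ x := by simpa using dotProduct_star_self_pos_iff.2 hx
  exact hle.not_gt (by positivity)

end OldroydB

theorem stmt_11 (n : ℕ) (c m : ℝ → Matrix (Fin n) (Fin n) ℝ) (W : ℝ) (hW : 0 < W)
    (hm : Continuous m)
    (hder : ∀ t (i j : Fin n), HasDerivAt (fun s => c s i j)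
      ((c t * m t + (m t)ᵀ * c t +
        W⁻¹ • ((1 : Matrix (Fin n) (Fin n) ℝ) - c t)) i j) t)
    (h0 : (c 0).PosDef) :
    ∀ t : ℝ, 0 ≤ t → (c t).PosDef := by
  have hc : ∀ t, HasDerivAt c (oldroydB W (m t) (c t)) t := fun t => hasDerivAt_iff.2 (hder t)
  have hsymm : ∀ t, (c t).IsSymm :=
    isSymm_of_hasDerivAt_oldroydB hm hc (isHermitian_iff_isSymm.1 h0.isHermitian)
  have hcont : Continuous c := continuous_iff_continuousAt.2 fun t => (hc t).continuousAt
  refine forall_ge_of_continuous_induction h0 (fun t _ ht => ?_) (fun T hT hbefore => ?_)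
  · filter_upwards [nhdsWithin_le_nhds ((hcont.tendsto t).eventually ht.eventually_posDef)]
      with s hs using hs (isHermitian_iff_isSymm.2 (hsymm s))
  · refine posDef_of_hasDerivAt_oldroydB hW (hc T) (hsymm T) ?_
    filter_upwards [Ioo_mem_nhdsLT hT] with s hs using hbefore s ⟨hs.1.le, hs.2⟩
end

section
/- If b is an invertible symmetric real matrix solving db/dt = b·m + a·b + (1/(2W))(b⁻¹ − b) with a antisymmetric chosen so that the right-hand side is symmetric, then d/dt tr(b·b) = 2 tr(b·b·m) + (1/W)(n − tr(b·b)). -/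
/-!
Differentiating `tr (b b)` entrywise gives `tr (b' b + b b') = 2 tr (b' b)`. Substituting the flow,
`tr (a b b)` vanishes because `a` is antisymmetric and `b b` is symmetric, and
`tr (b⁻¹ b) = n`; what remains is the stated right-hand side.
-/

open Matrix

namespace Matrix

variable {ι R : Type*} [Fintype ι]

theorem trace_mul_eq_zero_of_transpose_eq_neg [CommRing R] [NoZeroDivisors R] [CharZero R]
    {A S : Matrix ι ι R} (hA : Aᵀ = -A) (hS : S.IsSymm) : (A * S).trace = 0 := by
  have h : (A * S).trace = -(A * S).trace := by
    conv_lhs => rw [← trace_transpose, transpose_mul, hA, hS.eq, mul_neg, trace_neg,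
      trace_mul_comm]
  exact self_eq_neg.mp h

theorem hasDerivAt_trace_mul {𝕜 : Type*} [NontriviallyNormedField 𝕜]
    {f g : 𝕜 → Matrix ι ι 𝕜} {f' g' : Matrix ι ι 𝕜} {t : 𝕜}
    (hf : ∀ i j, HasDerivAt (fun s => f s i j) (f' i j) t)
    (hg : ∀ i j, HasDerivAt (fun s => g s i j) (g' i j) t) :
    HasDerivAt (fun s => (f s * g s).trace) (f' * g t + f t * g').trace t := by
  have hsum : HasDerivAt (fun s => ∑ i, ∑ j, f s i j * g s j i)
      (∑ i, ∑ j, (f' i j * g t j i + f t i j * g' j i)) t :=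
    HasDerivAt.fun_sum fun i _ => HasDerivAt.fun_sum fun j _ => (hf i j).mul (hg j i)
  convert hsum using 1
  · ext s
    simp only [trace, diag, mul_apply]
  · simp only [trace, diag, add_apply, mul_apply, Finset.sum_add_distrib]

theorem trace_mul_add_mul_of_eq_flow [Field R] [CharZero R] [DecidableEq ι]
    {b b' m a : Matrix ι ι R} {c : R} (hb : b.IsSymm) (hbinv : IsUnit b.det) (ha : aᵀ = -a)
    (hb' : b' = b * m + a * b + c • (b⁻¹ - b)) :
    (b' * b + b * b').trace
      = 2 * (b * b * m).trace + 2 * c * (Fintype.card ι - (b * b).trace) := by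
  have hbb : (b * b).IsSymm := by
    rw [IsSymm, transpose_mul, hb.eq]
  have hab : (a * (b * b)).trace = 0 := trace_mul_eq_zero_of_transpose_eq_neg ha hbb
  rw [trace_add, trace_mul_comm b b', ← two_mul]
  simp only [hb', add_mul, smul_mul, sub_mul, trace_add, trace_smul, trace_sub, mul_assoc a,
    hab, nonsing_inv_mul _ hbinv, trace_one, trace_mul_cycle b m b, smul_eq_mul]
  ring

end Matrix

theorem stmt_14_general (n : ℕ) (b m a : ℝ → Matrix (Fin n) (Fin n) ℝ) (W : ℝ)
    (hsymm : ∀ t, (b t).IsSymm)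
    (hinv : ∀ t, IsUnit (b t).det)
    (hanti : ∀ t, (a t)ᵀ = -(a t))
    (hder : ∀ t (i j : Fin n), HasDerivAt (fun s => b s i j)
      ((b t * m t + a t * b t + (2 * W)⁻¹ • ((b t)⁻¹ - b t)) i j) t) :
    ∀ t, HasDerivAt (fun s => (b s * b s).trace)
      (2 * (b t * b t * m t).trace + W⁻¹ * ((n : ℝ) - (b t * b t).trace)) t := by
  intro t
  have hderiv := hasDerivAt_trace_mul (hder t) (hder t)
  have hcoeff : 2 * (2 * W)⁻¹ = W⁻¹ := by ring
  rwa [trace_mul_add_mul_of_eq_flow (hsymm t) (hinv t) (hanti t) rfl, Fintype.card_fin,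
    hcoeff] at hderiv

theorem stmt_14 (n : ℕ) (b m a : ℝ → Matrix (Fin n) (Fin n) ℝ) (W : ℝ) (hW : 0 < W)
    (hsymm : ∀ t, (b t).IsSymm)
    (hinv : ∀ t, IsUnit (b t).det)
    (hanti : ∀ t, (a t)ᵀ = -(a t))
    (hrhs : ∀ t, (b t * m t + a t * b t + (2 * W)⁻¹ • ((b t)⁻¹ - b t)).IsSymm)
    (hder : ∀ t (i j : Fin n), HasDerivAt (fun s => b s i j)
      ((b t * m t + a t * b t + (2 * W)⁻¹ • ((b t)⁻¹ - b t)) i j) t) :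
    ∀ t, HasDerivAt (fun s => (b s * b s).trace)
      (2 * (b t * b t * m t).trace + W⁻¹ * ((n : ℝ) - (b t * b t).trace)) t :=
  stmt_14_general n b m a W hsymm hinv hanti hder
end
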